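/- arXiv:math/0412311 — 4 statements merged into one kernel-verified Lean document; each statement's English description precedes it below -/
import Mathlib

section
/- For any two distinct values k ≠ m in Fin 10, the probability that the first card drawn has value k while the dealer's hole card does not have value m equals (count k) * (t − count m − 1) / (t * (t − 1)). -/
/-!
The map `σ ↦ (σ first, σ hole)` has a fibre of size `(t - 2)!` over every pair of distinct
positions, since each such fibre is a left translate of the pointwise stabiliser of
`{first, hole}`. The event is the preimage of the off-diagonal part of `A × B`, where `A` holds the
cards of value `k` and `B` those of value other than `m`; as `k ≠ m` we have `A ⊆ B`, so that part
has `#A * (#B - 1)` elements, and `t! = t (t - 1) (t - 2)!` gives the formula.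
-/

open PMF ENNReal Equiv Finset Nat

namespace Equiv.Perm

theorem exists_apply_eq_and_apply_eq {α : Type*} {i j a b : α} (hij : i ≠ j) (hab : a ≠ b) :
    ∃ π : Perm α, π i = a ∧ π j = b := by
  obtain ⟨π, hπ⟩ := Perm.exists_extending_pair ![i, j] ![a, b]
    (by simp [hij]) (by simp [hab])
  exact ⟨π, hπ 0, hπ 1⟩

variable {α : Type*} [DecidableEq α] [Fintype α]

theorem card_filter_forall_mem_apply_eq_self (s : Finset α) :
    #{σ : Perm α | ∀ a ∈ s, σ a = a} = (Fintype.card α - #s)! := by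
  let e : Perm {a // a ∉ s} ≃ {σ : Perm α // ∀ a ∈ s, σ a = a} :=
    (Perm.subtypeEquivSubtypePerm (· ∉ s)).trans
      (subtypeEquivRight fun σ => by simp only [not_not])
  rw [← Fintype.card_subtype, ← Fintype.card_congr e, Fintype.card_perm,
    Fintype.card_subtype_compl, Fintype.card_coe]

theorem card_filter_apply_eq_and_apply_eq {i j a b : α} (hij : i ≠ j) (hab : a ≠ b) :
    #{σ : Perm α | σ i = a ∧ σ j = b} = (Fintype.card α - 2)! := by
  obtain ⟨π, hπi, hπj⟩ := exists_apply_eq_and_apply_eq hij hab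
  rw [← card_pair hij, ← card_filter_forall_mem_apply_eq_self]
  refine card_equiv (Equiv.mulLeft π⁻¹) fun σ => ?_
  simp only [mem_filter, mem_univ, true_and, mem_insert, mem_singleton, forall_eq_or_imp,
    forall_eq, coe_mulLeft, Perm.mul_apply, inv_eq_iff_eq, hπi, hπj]

theorem card_filter_apply_pair_mem {i j : α} (hij : i ≠ j) {T : Finset (α × α)}
    (hT : ∀ p ∈ T, p.1 ≠ p.2) :
    #{σ : Perm α | (σ i, σ j) ∈ T} = #T * (Fintype.card α - 2)! := by
  rw [card_eq_sum_card_fiberwise (f := fun σ : Perm α => (σ i, σ j)) (t := T)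
    (s := {σ : Perm α | (σ i, σ j) ∈ T}) (fun σ hσ => (mem_filter.mp hσ).2),
    ← smul_eq_mul, ← sum_const]
  refine sum_congr rfl fun p hp => ?_
  rw [filter_filter, ← card_filter_apply_eq_and_apply_eq hij (hT p hp)]
  congr 1
  ext σ
  simp only [mem_filter, mem_univ, true_and, Prod.ext_iff]
  constructor
  · exact And.right
  · rintro ⟨hi, hj⟩
    exact ⟨by rw [hi, hj]; exact hp, hi, hj⟩

end Equiv.Perm

theorem Finset.card_filter_product_ne_of_subset {α : Type*} [DecidableEq α] {A B : Finset α}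
    (hAB : A ⊆ B) : #{p ∈ A ×ˢ B | p.1 ≠ p.2} = #A * (#B - 1) := by
  rw [card_filter, sum_product, ← smul_eq_mul, ← sum_const]
  refine sum_congr rfl fun a ha => ?_
  rw [← card_filter, filter_ne, card_erase_of_mem (hAB ha)]

/-- For any two distinct values `k ≠ m` in `Fin 10`, the probability that the first
card drawn (position 0) has value `k` while the dealer's hole card (position `t-1`)
does not have value `m` equals `(count k) * (t − count m − 1) / (t * (t − 1))`. -/
theorem prob_first_eq_k_and_hole_ne_m
    (t : ℕ) (ht : 2 ≤ t) (v : Fin t → Fin 10) (k m : Fin 10) (hkm : k ≠ m) :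
    (PMF.uniformOfFintype (Equiv.Perm (Fin t))).toOuterMeasure
        {σ : Equiv.Perm (Fin t) |
          v (σ ⟨0, by omega⟩) = k ∧ v (σ ⟨t - 1, by omega⟩) ≠ m}
      = (((Finset.univ.filter (fun i => v i = k)).card : ℝ≥0∞)
          * ((t - (Finset.univ.filter (fun i => v i = m)).card - 1 : ℕ) : ℝ≥0∞))
        / ((t : ℝ≥0∞) * ((t - 1 : ℕ) : ℝ≥0∞)) := by
  set first : Fin t := ⟨0, by omega⟩
  set hole : Fin t := ⟨t - 1, by omega⟩
  have hne : first ≠ hole := by simp only [first, hole, ne_eq, Fin.mk.injEq]; omega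
  set A : Finset (Fin t) := {i | v i = k}
  set B : Finset (Fin t) := {i | v i ≠ m}
  have hAB : A ⊆ B := fun i hi => by
    simp only [A, B, mem_filter, mem_univ, true_and] at hi ⊢
    exact hi ▸ hkm
  have hB : #B = t - #{i | v i = m} := by
    refine eq_tsub_of_add_eq ?_
    rw [add_comm, card_filter_add_card_filter_not, Finset.card_fin]
  have hevent : {σ : Perm (Fin t) | v (σ first) = k ∧ v (σ hole) ≠ m}
      = {σ : Perm (Fin t) | (σ first, σ hole) ∈ {p ∈ A ×ˢ B | p.1 ≠ p.2}} := by
    ext σ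
    simp only [A, B, Set.mem_ofPred_eq, mem_filter, mem_product, mem_univ, true_and]
    exact (and_iff_left (σ.injective.ne hne)).symm
  have hfac : t ! = t * (t - 1) * (t - 2)! := by
    rw [← factorial_mul_descFactorial (k := 2) ht, descFactorial_succ, descFactorial_one]
    ring
  rw [hevent, toOuterMeasure_uniformOfFintype_apply, Fintype.card_perm, Fintype.card_fin,
    Fintype.card_subtype]
  simp only [Set.mem_ofPred_eq]
  rw [Perm.card_filter_apply_pair_mem hne (fun p hp => (mem_filter.mp hp).2),
    card_filter_product_ne_of_subset hAB, hB, Fintype.card_fin, hfac]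
  simp only [Nat.cast_mul]
  exact ENNReal.mul_div_mul_right _ _ (by positivity) (natCast_ne_top _)
end

section
/- Conditional card probability after excluding a dealer natural (Appendix A, same-value case): if count m < t (so the conditioning event has positive probability), then the conditional probability that the first card drawn has value m, given that the dealer's hole card does not have value m, equals (count m) / (t − 1). (With m = ace and dealer showing a ten, this is the formula Q[1] = a₁/(t − 1).) -/
open PMF ENNReal

section Aux

open Finset

variable {t : ℕ}

private lemma exists_perm_two (x y i j : Fin t) (hxy : x ≠ y) (hij : i ≠ j) :
    ∃ τ : Equiv.Perm (Fin t), τ x = i ∧ τ y = j := by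
  refine ⟨(Equiv.swap ((Equiv.swap x i) y) j) * (Equiv.swap x i), ?_, ?_⟩
  · have h1 : i ≠ (Equiv.swap x i) y := by
      intro h
      apply hxy
      apply (Equiv.swap x i).injective
      rw [Equiv.swap_apply_left, ← h]
    simp only [Equiv.Perm.mul_apply, Equiv.swap_apply_left]
    exact Equiv.swap_apply_of_ne_of_ne h1 hij
  · simp only [Equiv.Perm.mul_apply, Equiv.swap_apply_left]

private lemma card_fiber_eq (x y : Fin t) (hxy : x ≠ y) (i j : Fin t) (hij : i ≠ j) :
    (univ.filter fun σ : Equiv.Perm (Fin t) => σ x = i ∧ σ y = j).card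
      = (univ.filter fun σ : Equiv.Perm (Fin t) => σ x = x ∧ σ y = y).card := by
  obtain ⟨τ, hτx, hτy⟩ := exists_perm_two x y i j hxy hij
  apply Finset.card_bij (fun σ _ => τ⁻¹ * σ)
  · intro σ hσ
    simp only [mem_filter, mem_univ, true_and, Equiv.Perm.mul_apply] at *
    rw [hσ.1, hσ.2, ← hτx, ← hτy]
    simp
  · intro σ₁ h₁ σ₂ h₂ h
    exact mul_left_cancel h
  · intro σ' h'
    refine ⟨τ * σ', ?_, by group⟩
    simp only [mem_filter, mem_univ, true_and, Equiv.Perm.mul_apply] at *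
    rw [h'.1, h'.2, hτx, hτy]
    exact ⟨rfl, rfl⟩

private lemma count_perm_eq (x y : Fin t) (hxy : x ≠ y) (Q : Fin t × Fin t → Prop)
    [DecidablePred Q] (hQ : ∀ p, Q p → p.1 ≠ p.2) :
    (univ.filter fun σ : Equiv.Perm (Fin t) => Q (σ x, σ y)).card
      = (univ.filter Q).card
        * (univ.filter fun σ : Equiv.Perm (Fin t) => σ x = x ∧ σ y = y).card := by
  classical
  rw [Finset.card_eq_sum_card_fiberwise
      (f := fun σ : Equiv.Perm (Fin t) => (σ x, σ y)) (t := univ.filter Q)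
      (fun σ hσ => by simpa using (mem_filter.mp hσ).2)]
  rw [Finset.sum_congr rfl (fun p hp => ?_), Finset.sum_const, smul_eq_mul]
  have hp' : Q p := (mem_filter.mp hp).2
  rw [Finset.filter_filter]
  have heq : (univ.filter fun σ : Equiv.Perm (Fin t) => Q (σ x, σ y) ∧ (σ x, σ y) = p)
      = univ.filter fun σ : Equiv.Perm (Fin t) => σ x = p.1 ∧ σ y = p.2 := by
    apply Finset.filter_congr
    intro σ _
    constructor
    · rintro ⟨_, h⟩
      exact ⟨congrArg Prod.fst h, congrArg Prod.snd h⟩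
    · rintro ⟨h1, h2⟩
      have hpp : (σ x, σ y) = p := by rw [h1, h2]
      exact ⟨hpp ▸ hp', hpp⟩
  rw [heq, card_fiber_eq x y hxy p.1 p.2 (hQ p hp')]

private lemma meas_filter (p : Equiv.Perm (Fin t) → Prop) [DecidablePred p] :
    (PMF.uniformOfFintype (Equiv.Perm (Fin t))).toOuterMeasure {σ | p σ}
      = ((univ.filter p).card : ℝ≥0∞)
        * ((Fintype.card (Equiv.Perm (Fin t)) : ℝ≥0∞))⁻¹ := by
  rw [PMF.toOuterMeasure_apply, tsum_fintype]
  simp only [Set.indicator_apply, Set.mem_setOf_eq, PMF.uniformOfFintype_apply]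
  rw [← Finset.sum_filter, Finset.sum_const, nsmul_eq_mul]

end Aux

/-- Conditional probability, same-value case (Appendix A): if `count m < t`, then the
conditional probability that the first card drawn has value `m`, given that the
dealer's hole card does not have value `m`, equals `(count m) / (t − 1)`:
`Q[1] = a₁ / (t − 1)`. -/
theorem cond_prob_first_eq_given_hole_ne
    (t : ℕ) (ht : 2 ≤ t) (v : Fin t → Fin 10) (m : Fin 10)
    (hm : (Finset.univ.filter (fun i => v i = m)).card < t) :
    ((PMF.uniformOfFintype (Equiv.Perm (Fin t))).toOuterMeasure
        {σ : Equiv.Perm (Fin t) |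
          v (σ ⟨0, by omega⟩) = m ∧ v (σ ⟨t - 1, by omega⟩) ≠ m})
      / ((PMF.uniformOfFintype (Equiv.Perm (Fin t))).toOuterMeasure
          {σ : Equiv.Perm (Fin t) | v (σ ⟨t - 1, by omega⟩) ≠ m})
      = ((Finset.univ.filter (fun i => v i = m)).card : ℝ≥0∞)
          / ((t - 1 : ℕ) : ℝ≥0∞) := by
  set x : Fin t := ⟨0, by omega⟩ with hxdef
  set y : Fin t := ⟨t - 1, by omega⟩ with hydef
  have hxy : x ≠ y := by
    simp only [hxdef, hydef, ne_eq, Fin.mk.injEq]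
    omega
  set a := (Finset.univ.filter (fun i => v i = m)).card with ha
  set b := (Finset.univ.filter (fun i => v i ≠ m)).card with hb
  have hab : a + b = t := by
    rw [ha, hb]
    simpa using Finset.card_filter_add_card_filter_not
      (s := (Finset.univ : Finset (Fin t))) (p := fun i => v i = m)
  have hb1 : 1 ≤ b := by omega
  set c := (Finset.univ.filter fun σ : Equiv.Perm (Fin t) => σ x = x ∧ σ y = y).card with hc
  have hc1 : 1 ≤ c := Finset.card_pos.mpr ⟨1, by simp⟩
  -- numerator count
  have hN1 : (Finset.univ.filter
      (fun σ : Equiv.Perm (Fin t) => v (σ x) = m ∧ v (σ y) ≠ m)).card = a * (b * c) := by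
    have h := count_perm_eq x y hxy (fun p => v p.1 = m ∧ v p.2 ≠ m)
      (fun p hp h => hp.2 (h ▸ hp.1))
    have h2 : (Finset.univ.filter
        (fun σ : Equiv.Perm (Fin t) => v (σ x) = m ∧ v (σ y) ≠ m)).card
        = (Finset.univ.filter (fun p : Fin t × Fin t => v p.1 = m ∧ v p.2 ≠ m)).card * c := by
      convert h using 3
    rw [h2]
    have h3 : (Finset.univ.filter (fun p : Fin t × Fin t => v p.1 = m ∧ v p.2 ≠ m)).card
        = a * b := by
      rw [← Finset.univ_product_univ,
        Finset.filter_product (fun i : Fin t => v i = m) (fun i : Fin t => v i ≠ m),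
        Finset.card_product, ha, hb]
    rw [h3, mul_assoc]
  -- denominator count
  have hN2 : (Finset.univ.filter
      (fun σ : Equiv.Perm (Fin t) => v (σ y) ≠ m)).card = (t - 1) * (b * c) := by
    have h := count_perm_eq x y hxy (fun p : Fin t × Fin t => v p.2 ≠ m ∧ p.1 ≠ p.2)
      (fun p hp => hp.2)
    have h2 : (Finset.univ.filter
        (fun σ : Equiv.Perm (Fin t) => v (σ y) ≠ m)).card
        = (Finset.univ.filter
            (fun p : Fin t × Fin t => v p.2 ≠ m ∧ p.1 ≠ p.2)).card * c := by
      have heq : (Finset.univ.filter (fun σ : Equiv.Perm (Fin t) => v (σ y) ≠ m))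
          = (Finset.univ.filter
              fun σ : Equiv.Perm (Fin t) => v (σ y) ≠ m ∧ σ x ≠ σ y) := by
        apply Finset.filter_congr
        intro σ _
        simp only [ne_eq, iff_self_and]
        exact fun _ h' => hxy (σ.injective h')
      rw [heq]
      convert h using 3
    rw [h2]
    have h3 : (Finset.univ.filter
        (fun p : Fin t × Fin t => v p.2 ≠ m ∧ p.1 ≠ p.2)).card = b * (t - 1) := by
      rw [Finset.card_filter, Fintype.sum_prod_type_right]
      have hrow : ∀ j : Fin t, (∑ i : Fin t, if v j ≠ m ∧ i ≠ j then 1 else 0)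
          = if v j ≠ m then t - 1 else 0 := by
        intro j
        by_cases h' : v j ≠ m
        · simp only [ne_eq, h', not_false_eq_true, true_and, if_true]
          rw [← Finset.card_filter, Finset.filter_ne' Finset.univ j,
            Finset.card_erase_of_mem (Finset.mem_univ j)]
          rw [Finset.card_univ, Fintype.card_fin]
        · simp [h']
      rw [Finset.sum_congr rfl fun j _ => hrow j, ← Finset.sum_filter,
        Finset.sum_const, smul_eq_mul, ← hb]
    rw [h3]
    ring
  rw [meas_filter (fun σ : Equiv.Perm (Fin t) => v (σ x) = m ∧ v (σ y) ≠ m),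
    meas_filter (fun σ : Equiv.Perm (Fin t) => v (σ y) ≠ m)]
  have hk0 : ((Fintype.card (Equiv.Perm (Fin t)) : ℝ≥0∞))⁻¹ ≠ 0 := by
    simp [ENNReal.inv_ne_zero]
  have hktop : ((Fintype.card (Equiv.Perm (Fin t)) : ℝ≥0∞))⁻¹ ≠ ⊤ := by
    simp [Fintype.card_ne_zero]
  rw [ENNReal.mul_div_mul_right _ _ hk0 hktop, hN1, hN2, Nat.cast_mul a (b * c), Nat.cast_mul (t - 1) (b * c)]
  have hbc0 : ((b * c : ℕ) : ℝ≥0∞) ≠ 0 :=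
    Nat.cast_ne_zero.mpr (Nat.mul_pos hb1 hc1).ne'
  have hbctop : ((b * c : ℕ) : ℝ≥0∞) ≠ ⊤ := ENNReal.natCast_ne_top _
  rw [ENNReal.mul_div_mul_right _ _ hbc0 hbctop]
end

section
/- The multinomial identity of Appendix A: let a : Fin 10 → ℕ with a 0 ≥ 1 (index 0 representing the ace), and let t = ∑ k, a k with t ≥ 2. Then, working in ℚ, the sum over all k ≠ 0 with a k ≥ 1 of the term ((t − 2)! / ((a 0 − 1)! * (a k − 1)! * ∏_{j ∉ {0, k}} (a j)!)), multiplied by (∏ j, (a j)!) / t!, equals (a 0 * (t − a 0)) / (t * (t − 1)). (This counts the permutations of the unknown cards whose first card is an ace and whose last card is a non-ace, as a fraction of all permutations of the multiset.) -/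
/-!
Cancelling factorials, the `k`-th summand is `a 0 * a k / (t * (t - 1))`: the permutations
with an ace first and a card of type `k` last are those of the multiset with one ace and one
`k` removed. Summing over the non-ace types `k` gives `∑_{k ≠ 0} a k = t - a 0`.
-/

open Finset Nat

theorem cast_factorial_eq_mul_pred_mul_factorial {n : ℕ} (hn : 1 ≤ n) :
    (n ! : ℚ) = n * (n - 1)! := by
  rw [← Nat.mul_factorial_pred (by omega)]
  push_cast
  rfl

theorem cast_factorial_eq_mul_mul_factorial_sub_two {t : ℕ} (ht : 2 ≤ t) :
    (t ! : ℚ) = t * ((t - 1 : ℕ) : ℚ) * (t - 2)! := by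
  rw [cast_factorial_eq_mul_pred_mul_factorial (by omega),
    cast_factorial_eq_mul_pred_mul_factorial (n := t - 1) (by omega),
    show t - 1 - 1 = t - 2 by omega, mul_assoc]

section

variable {ι : Type*} [Fintype ι] [DecidableEq ι]

theorem prod_eq_mul_mul_prod_filter_ne_and_ne {M : Type*} [CommMonoid M] (f : ι → M)
    {i k : ι} (hki : k ≠ i) :
    ∏ j, f j = f i * f k * ∏ j ∈ univ.filter (fun j => j ≠ i ∧ j ≠ k), f j := by
  have hk : k ∈ univ.erase i := mem_erase.mpr ⟨hki, mem_univ k⟩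
  rw [← filter_filter, filter_ne', filter_ne', mul_assoc, mul_prod_erase _ f hk,
    mul_prod_erase _ f (mem_univ i)]

theorem multinomial_first_last_term (a : ι → ℕ) {i k : ι} (hki : k ≠ i) (hi : 1 ≤ a i)
    (hk : 1 ≤ a k) {t : ℕ} (ht : 2 ≤ t) :
    ((t - 2)! : ℚ) / ((a i - 1)! * (a k - 1)!
        * ∏ j ∈ univ.filter (fun j => j ≠ i ∧ j ≠ k), ((a j)! : ℚ))
      * ((∏ j, ((a j)! : ℚ)) / t !)
    = a i * a k / (t * ((t - 1 : ℕ) : ℚ)) := by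
  have hrest : ∏ j ∈ univ.filter (fun j => j ≠ i ∧ j ≠ k), ((a j)! : ℚ) ≠ 0 :=
    prod_ne_zero_iff.mpr fun j _ => by positivity
  have ht1 : ((t - 1 : ℕ) : ℚ) ≠ 0 := by
    have : 0 < t - 1 := by omega
    positivity
  rw [prod_eq_mul_mul_prod_filter_ne_and_ne _ hki, cast_factorial_eq_mul_mul_factorial_sub_two ht,
    cast_factorial_eq_mul_pred_mul_factorial hi, cast_factorial_eq_mul_pred_mul_factorial hk]
  field_simp

theorem sum_filter_ne_and_pos_eq_sub (a : ι → ℕ) (i : ι) :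
    ∑ k ∈ univ.filter (fun k => k ≠ i ∧ 1 ≤ a k), a k = ∑ k, a k - a i := by
  rw [← filter_filter, sum_filter_of_ne fun k _ hk => Nat.one_le_iff_ne_zero.mpr hk,
    filter_ne', ← add_sum_erase _ a (mem_univ i), Nat.add_sub_cancel_left]

end

/-- The multinomial identity of Appendix A: with `a 0 ≥ 1` aces among `t = ∑ k, a k ≥ 2`
cards, the fraction of permutations of the multiset whose first card is an ace and
whose last card is a non-ace equals `a 0 * (t − a 0) / (t * (t − 1))`. -/
theorem appendixA_multinomial_identity
    (a : Fin 10 → ℕ) (ha : 1 ≤ a 0) (t : ℕ) (htsum : t = ∑ k, a k) (ht : 2 ≤ t) :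
    (∑ k ∈ Finset.univ.filter (fun k : Fin 10 => k ≠ 0 ∧ 1 ≤ a k),
        (((t - 2)! : ℚ)
          / (((a 0 - 1)! : ℚ) * ((a k - 1)! : ℚ)
              * ∏ j ∈ Finset.univ.filter (fun j : Fin 10 => j ≠ 0 ∧ j ≠ k),
                  ((a j)! : ℚ))))
      * ((∏ j, ((a j)! : ℚ)) / (t ! : ℚ))
    = ((a 0 : ℚ) * ((t - a 0 : ℕ) : ℚ)) / ((t : ℚ) * ((t - 1 : ℕ) : ℚ)) := by
  have hsum := sum_filter_ne_and_pos_eq_sub a 0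
  rw [← htsum] at hsum
  rw [sum_mul, sum_congr rfl fun k hk => multinomial_first_last_term a
      (mem_filter.mp hk).2.1 ha (mem_filter.mp hk).2.2 ht, ← sum_div, ← mul_sum, ← hsum, Nat.cast_sum]
end

section
/- The longest blackjack hand has 20 cards: let l be a list of natural numbers, each entry c satisfying 1 ≤ c ≤ 10 (card values, with 1 denoting an ace). Define the blackjack total of a list s by T(s) = s.sum + 10 if 1 ∈ s and s.sum + 10 ≤ 21, and T(s) = s.sum otherwise. If for every k with 2 ≤ k < l.length the prefix l.take k satisfies T(l.take k) < 21 (the player may only hit a total below 21), then l.length ≤ 20. -/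
/-- The blackjack total of a list of cards: an ace (value 1) counts as 11 when this
does not bust the hand. -/
def blackjackTotal (s : List ℕ) : ℕ :=
  if 1 ∈ s ∧ s.sum + 10 ≤ 21 then s.sum + 10 else s.sum

lemma bj_len_le_sum (s : List ℕ) (h : ∀ c ∈ s, 1 ≤ c) : s.length ≤ s.sum := by
  induction s with
  | nil => simp
  | cons a t ih =>
    have h1 := h a (by simp)
    have h2 := ih (fun c hc => h c (by simp [hc]))
    simp only [List.length_cons, List.sum_cons]
    omega

lemma bj_all_one (s : List ℕ) (h : ∀ c ∈ s, 1 ≤ c) (hs : s.sum ≤ s.length) :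
    ∀ c ∈ s, c = 1 := by
  induction s with
  | nil => simp
  | cons a t ih =>
    have h1 := h a (by simp)
    have h2 := bj_len_le_sum t (fun c hc => h c (by simp [hc]))
    simp only [List.length_cons, List.sum_cons] at hs
    intro c hc
    rcases List.mem_cons.1 hc with rfl | hc
    · omega
    · exact ih (fun c hc => h c (by simp [hc])) (by omega) c hc

/-- The longest blackjack hand has 20 cards: if every card value lies in `{1, …, 10}`
and every prefix of length `k` with `2 ≤ k < l.length` has blackjack total below 21
(the player may only hit a total below 21), then the hand has at most 20 cards. -/
theorem blackjack_hand_length_le_twenty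
    (l : List ℕ) (hc : ∀ c ∈ l, 1 ≤ c ∧ c ≤ 10)
    (hhit : ∀ k, 2 ≤ k → k < l.length → blackjackTotal (l.take k) < 21) :
    l.length ≤ 20 := by
  by_contra hcon
  push_neg at hcon
  have h20 := hhit 20 (by norm_num) (by omega)
  have hlen20 : (l.take 20).length = 20 := by
    rw [List.length_take]; omega
  have hge : 20 ≤ (l.take 20).sum := by
    have := bj_len_le_sum (l.take 20)
      (fun c hc' => (hc c (List.take_subset _ _ hc')).1)
    omega
  have hle : (l.take 20).sum ≤ 20 := by
    unfold blackjackTotal at h20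
    split at h20 <;> omega
  have hall : ∀ c ∈ l.take 20, c = 1 :=
    bj_all_one _ (fun c hc' => (hc c (List.take_subset _ _ hc')).1) (by omega)
  -- now consider the prefix of length 11
  have h11 := hhit 11 (by norm_num) (by omega)
  have hsub : ∀ c ∈ l.take 11, c = 1 := by
    intro c hc'
    apply hall
    have : l.take 11 = (l.take 20).take 11 := by
      rw [List.take_take]; norm_num
    rw [this] at hc'
    exact List.take_subset _ _ hc'
  have hlen11 : (l.take 11).length = 11 := by
    rw [List.length_take]; omega
  have hrep : l.take 11 = List.replicate 11 1 := by
    have := List.eq_replicate_of_mem hsub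
    rwa [hlen11] at this
  rw [hrep] at h11
  unfold blackjackTotal at h11
  simp [List.sum_replicate] at h11
end
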